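/- arXiv:1610.03395 — 6 statements merged into one kernel-verified Lean document; each statement's English description precedes it below -/
import Mathlib

section
/- Let R be a commutative ring and M an R-module. If for every R-module N the natural map M ⊗_R N → Hom_R(Hom_R(M,R), N), sending m ⊗ n to the map (w ↦ w(m)·n), is injective, then M is a flat R-module. -/
open TensorProduct

/-- The natural map `M ⊗ N → Hom(M*, N)`, `m ⊗ n ↦ (w ↦ w m • n)`. -/
noncomputable def natMap (R : Type*) [CommRing R] (M : Type*) [AddCommGroup M] [Module R M]
    (N : Type*) [AddCommGroup N] [Module R N] :
    M ⊗[R] N →ₗ[R] ((M →ₗ[R] R) →ₗ[R] N) :=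
  (dualTensorHom R (Module.Dual R M) N).comp (LinearMap.rTensor N (Module.Dual.eval R M))

/-!
The map `natMap` is natural in `N`, and post-composition with an injective map is injective, so
`natMap R M N` injective forces `M ⊗ -` to preserve every injection out of `N`. The hypothesis
only covers modules in the universe of `M`, which need not contain the ideals of `R`; this is
bridged by the character module `M⁺ = Hom_ℤ(M, ℚ/ℤ)`: every character of `N ⊗ M` is
`n ⊗ m ↦ φ n m` for some `φ : N → M⁺`, so the maps `M ⊗ φ : M ⊗ N → M ⊗ M⁺` jointly detect
zero, and injectivity of `natMap` at `M⁺` alone gives it at every `N`.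
-/

section

variable {R : Type*} [CommRing R] {M : Type*} [AddCommGroup M] [Module R M]
  {N : Type*} [AddCommGroup N] [Module R N] {N' : Type*} [AddCommGroup N'] [Module R N']

@[simp]
lemma natMap_tmul (m : M) (n : N) (w : M →ₗ[R] R) : natMap R M N (m ⊗ₜ n) w = w m • n := by
  simp [natMap]

lemma natMap_lTensor (f : N →ₗ[R] N') (x : M ⊗[R] N) :
    natMap R M N' (f.lTensor M x) = f ∘ₗ natMap R M N x := by
  induction x using TensorProduct.induction_on with
  | zero => simp
  | tmul m n => ext w; simp
  | add x y hx hy => simp [hx, hy, LinearMap.comp_add]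

lemma natMap_eq_zero_of_lTensor_eq_zero {f : N →ₗ[R] N'} (hf : Function.Injective f)
    {x : M ⊗[R] N} (hx : f.lTensor M x = 0) : natMap R M N x = 0 := by
  ext w
  apply hf
  rw [← LinearMap.comp_apply, ← natMap_lTensor, hx]
  simp

lemma lTensor_injective_of_natMap_injective (hN : Function.Injective (natMap R M N))
    {f : N →ₗ[R] N'} (hf : Function.Injective f) : Function.Injective (f.lTensor M) :=
  (injective_iff_map_eq_zero _).2 fun _ hx =>
    hN ((natMap_eq_zero_of_lTensor_eq_zero hf hx).trans (map_zero _).symm)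

lemma eq_zero_of_forall_lTensor_characterModule_eq_zero {x : M ⊗[R] N}
    (hx : ∀ φ : N →ₗ[R] CharacterModule M, φ.lTensor M x = 0) : x = 0 := by
  refine (TensorProduct.comm R M N).injective ?_
  rw [map_zero]
  refine CharacterModule.eq_zero_of_character_apply fun c => ?_
  obtain ⟨φ, rfl⟩ := CharacterModule.homEquiv.surjective c
  have hpair (y : N ⊗[R] M) : CharacterModule.homEquiv φ y =
      CharacterModule.homEquiv LinearMap.id (φ.rTensor M y) := by
    induction y using TensorProduct.induction_on with
    | zero => simp
    | tmul n m => rfl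
    | add y z hy hz => simp only [map_add, hy, hz]
  rw [hpair, LinearMap.rTensor_comm, hx, map_zero, map_zero]

lemma natMap_injective_of_injective_characterModule
    (h : Function.Injective (natMap R M (CharacterModule M))) :
    Function.Injective (natMap R M N) :=
  (injective_iff_map_eq_zero _).2 fun x hx =>
    eq_zero_of_forall_lTensor_characterModule_eq_zero fun φ =>
      h (by rw [natMap_lTensor, hx, LinearMap.comp_zero, map_zero])

end

theorem stmt0 (R : Type u) [CommRing R] (M : Type v) [AddCommGroup M] [Module R M]
    (h : ∀ (N : Type v) [AddCommGroup N] [Module R N], Function.Injective (natMap R M N)) :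
    Module.Flat R M :=
  Module.Flat.iff_lTensor_injective'.2 fun I =>
    lTensor_injective_of_natMap_injective
      (natMap_injective_of_injective_characterModule (h (CharacterModule M))) I.injective_subtype
end

section
/- Let R be a commutative ring and M an R-module such that for every R-module N the natural map M ⊗_R N → Hom_R(M*, N) is injective. Then the canonical map M → M** is universally injective: for every commutative R-algebra S, the induced map M ⊗_R S → M** ⊗_R S is injective. -/
open TensorProduct

theorem stmt1 (R : Type u) [CommRing R] (M : Type v) [AddCommGroup M] [Module R M]
    (h : ∀ (N : Type v) [AddCommGroup N] [Module R N], Function.Injective (natMap R M N))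
    (S : Type v) [CommRing S] [Algebra R S] :
    Function.Injective (LinearMap.rTensor S (Module.Dual.eval R M)) :=
  (h S).of_comp (f := dualTensorHom R (Module.Dual R M) S)
end

section
/- Let R be a commutative ring and M an R-module such that for every R-module P the natural map M ⊗_R P → Hom_R(M*, P) is injective. Then for every R-module N the natural map M ⊗_R N* → Hom_R(N, M), sending m ⊗ w to the map (n ↦ w(n)·m), is injective. -/
open TensorProduct

/-!
Write `x ∈ M ⊗ N*` as `∑ mᵢ ⊗ wᵢ` and suppose `∑ wᵢ(n) mᵢ = 0` for all `n`. The element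
`x` is the image of `y = ∑ mᵢ ⊗ eᵢ` under `M ⊗ φ`, where `φ : P → N*` sends `eᵢ` to `wᵢ`.
For every `w ∈ M*` one has `φ (natMap y w) = ∑ w(mᵢ) wᵢ = w ∘ (∑ wᵢ(·) mᵢ) = 0`, so the image
of `y` in `M ⊗ (P / ker φ)` is killed by `natMap`, hence vanishes, and so does `x`.
To apply the hypothesis, `P` must live in the universe of `N`; the free module on the `eᵢ`
over `R` need not, but `P = (Fin k → End N)` with `φ f = ∑ wᵢ ∘ fᵢ` does the same job,
since `wᵢ ∘ (r • id) = r • wᵢ`.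
-/

section

variable {R : Type*} [CommRing R] {M : Type*} [AddCommGroup M] [Module R M]
  {P : Type*} [AddCommGroup P] [Module R P] {Q : Type*} [AddCommGroup Q] [Module R Q]

@[simp]
lemma natMap_tmul_apply (m : M) (p : P) (w : Module.Dual R M) :
    natMap R M P (m ⊗ₜ p) w = w m • p := rfl

lemma natMap_lTensor_s2 (φ : P →ₗ[R] Q) (y : M ⊗[R] P) :
    natMap R M Q (LinearMap.lTensor M φ y) = φ ∘ₗ natMap R M P y := by
  induction y using TensorProduct.induction_on with
  | zero => simp
  | tmul m p => ext w; simp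
  | add a b ha hb => simp only [map_add, ha, hb, LinearMap.comp_add]

lemma lTensor_eq_zero_of_comp_natMap_eq_zero (φ : P →ₗ[R] Q)
    (hinj : Function.Injective (natMap R M (P ⧸ LinearMap.ker φ))) {y : M ⊗[R] P}
    (hy : φ ∘ₗ natMap R M P y = 0) : LinearMap.lTensor M φ y = 0 := by
  have hmkQ : LinearMap.lTensor M (LinearMap.ker φ).mkQ y = 0 := by
    refine hinj ?_
    ext w
    simpa [natMap_lTensor_s2, Submodule.Quotient.mk_eq_zero] using LinearMap.congr_fun hy w
  rw [← (LinearMap.ker φ).liftQ_mkQ φ le_rfl, LinearMap.lTensor_comp, LinearMap.comp_apply,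
    hmkQ, map_zero]

variable {N : Type*} [AddCommGroup N] [Module R N]

lemma comp_natMap_apply_apply (φ : P →ₗ[R] Module.Dual R N) (y : M ⊗[R] P)
    (w : Module.Dual R M) (n : N) :
    (φ ∘ₗ natMap R M P y) w n = w (((dualTensorHom R N M).comp
      (TensorProduct.comm R M (Module.Dual R N)).toLinearMap) (LinearMap.lTensor M φ y) n) := by
  induction y using TensorProduct.induction_on with
  | zero => simp
  | tmul m p => simp [mul_comm]
  | add a b ha hb => simp only [map_add, LinearMap.comp_add, LinearMap.add_apply, ha, hb]

end

lemma TensorProduct.exists_mem_range_lTensor_pi_end {R : Type*} [CommRing R]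
    {M : Type*} [AddCommGroup M] [Module R M] {N : Type*} [AddCommGroup N] [Module R N]
    (x : M ⊗[R] Module.Dual R N) :
    ∃ (k : ℕ) (φ : (Fin k → Module.End R N) →ₗ[R] Module.Dual R N),
      x ∈ LinearMap.range (LinearMap.lTensor M φ) := by
  obtain ⟨k, m, w, rfl⟩ := TensorProduct.exists_sum_tmul_eq x
  refine ⟨k, LinearMap.lsum R _ R fun i ↦ LinearMap.llcomp R N N R (w i),
    ∑ i, m i ⊗ₜ Pi.single i LinearMap.id, ?_⟩
  simp only [map_sum, LinearMap.lTensor_tmul, LinearMap.lsum_piSingle, LinearMap.llcomp_apply',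
    LinearMap.comp_id]

theorem stmt2 (R : Type u) [CommRing R] (M : Type v) [AddCommGroup M] [Module R M]
    (h : ∀ (P : Type v) [AddCommGroup P] [Module R P], Function.Injective (natMap R M P))
    (N : Type v) [AddCommGroup N] [Module R N] :
    Function.Injective
      ((dualTensorHom R N M).comp
        (TensorProduct.comm R M (Module.Dual R N)).toLinearMap) := by
  refine (injective_iff_map_eq_zero _).mpr fun x hx ↦ ?_
  obtain ⟨k, φ, y, rfl⟩ := TensorProduct.exists_mem_range_lTensor_pi_end x
  refine lTensor_eq_zero_of_comp_natMap_eq_zero φ (h _) ?_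
  refine LinearMap.ext fun w ↦ LinearMap.ext fun n ↦ ?_
  rw [comp_natMap_apply_apply, hx]
  simp
end

section
/- Let R be a commutative ring and P a projective R-module. Then for every R-module N the natural map P ⊗_R N → Hom_R(P*, N), sending p ⊗ n to the map (w ↦ w(p)·n), is injective. (Projective modules are universally torsionless.) -/
open TensorProduct

/-!
A projective module is a retract of a free module `F = P →₀ R`, and the natural map is natural
in the module, so injectivity for `P` follows from injectivity for `F`. For `F` the map is
injective because evaluating at the coordinate functionals recovers the coordinates of
`F ⊗ N ≃ P →₀ N`.
-/

namespace natMap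

variable {R : Type*} [CommRing R] {M M' : Type*} [AddCommGroup M] [Module R M]
  [AddCommGroup M'] [Module R M'] {N : Type*} [AddCommGroup N] [Module R N]

@[simp]
lemma tmul_apply (m : M) (n : N) (w : M →ₗ[R] R) : natMap R M N (m ⊗ₜ n) w = w m • n := by
  simp [natMap]

lemma rTensor_apply (f : M →ₗ[R] M') (x : M ⊗[R] N) (w : M' →ₗ[R] R) :
    natMap R M' N (f.rTensor N x) w = natMap R M N x (w ∘ₗ f) := by
  induction x using TensorProduct.induction_on with
  | zero => simp
  | tmul m n => simp
  | add x y hx hy => simp only [map_add, LinearMap.add_apply, hx, hy]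

lemma injective_of_comp_eq_id (f : M →ₗ[R] M') (g : M' →ₗ[R] M) (hgf : g ∘ₗ f = .id)
    (h : Function.Injective (natMap R M' N)) : Function.Injective (natMap R M N) := by
  have hf : Function.Injective (f.rTensor N) := fun x y hxy => by
    simpa only [← LinearMap.rTensor_comp_apply, hgf, LinearMap.rTensor_id_apply]
      using congrArg (g.rTensor N) hxy
  refine fun x y hxy => hf (h ?_)
  ext w : 1
  rw [rTensor_apply, rTensor_apply, hxy]

lemma finsuppScalarLeft_apply_eq (ι : Type*) [DecidableEq ι] (x : (ι →₀ R) ⊗[R] N) (i : ι) :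
    finsuppScalarLeft R N ι x i = natMap R (ι →₀ R) N x (Finsupp.lapply i) := by
  induction x using TensorProduct.induction_on with
  | zero => simp
  | tmul p n => simp
  | add x y hx hy => simp only [map_add, Finsupp.add_apply, LinearMap.add_apply, hx, hy]

lemma finsupp_injective (ι : Type*) : Function.Injective (natMap R (ι →₀ R) N) := by
  classical
  refine fun x y hxy => (finsuppScalarLeft R N ι).injective (Finsupp.ext fun i => ?_)
  rw [finsuppScalarLeft_apply_eq, finsuppScalarLeft_apply_eq, hxy]

end natMap

theorem stmt3 (R : Type u) [CommRing R] (P : Type v) [AddCommGroup P] [Module R P]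
    [Module.Projective R P]
    (N : Type w) [AddCommGroup N] [Module R N] :
    Function.Injective (natMap R P N) := by
  obtain ⟨s, hs⟩ := Module.projective_def'.mp ‹Module.Projective R P›
  exact natMap.injective_of_comp_eq_id s _ hs (natMap.finsupp_injective P)
end

section
/- Let R be a commutative ring, and let f: N → M be an R-linear map that is universally injective (f ⊗ id_S : N ⊗_R S → M ⊗_R S is injective for every commutative R-algebra S). If M is universally torsionless, then N is universally torsionless. -/
/-!
Every `R`-module `P` is an `R`-linear retract of a commutative `R`-algebra, namely the trivial
square-zero extension `C ⊕ P`, where `C` is the center of `End_R P` (rather than `R` itself, so that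
the algebra lives in the universe of `P`). Hence `f ⊗ id_P` is a retract of the injective map
`f ⊗ id_{C ⊕ P}` and is injective. Naturality of `natMap` in the first variable then exhibits
`natMap R N P`, followed by precomposition with `f*`, as `natMap R M P ∘ (f ⊗ id_P)`, which is
injective.
-/

open TensorProduct

namespace Module

variable (R : Type u) [CommRing R] (P : Type v) [AddCommGroup P] [Module R P]

abbrev centerEnd : Type v := Subalgebra.center R (Module.End R P)

instance : Module (centerEnd R P)ᵐᵒᵖ P :=
  Module.compHom P ((RingHom.id (centerEnd R P)).fromOpposite mul_comm)

instance : IsCentralScalar (centerEnd R P) P := ⟨fun _ _ => rfl⟩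

instance : IsScalarTower R (centerEnd R P)ᵐᵒᵖ P := ⟨fun _ _ _ => rfl⟩

theorem exists_commRing_algebra_retract :
    ∃ (S : Type v) (_ : CommRing S) (_ : Algebra R S) (i : P →ₗ[R] S) (p : S →ₗ[R] P),
      p ∘ₗ i = LinearMap.id :=
  ⟨TrivSqZeroExt (centerEnd R P) P, inferInstance, inferInstance,
    (TrivSqZeroExt.inrHom (centerEnd R P) P).restrictScalars R,
    (TrivSqZeroExt.sndHom (centerEnd R P) P).restrictScalars R, by ext; rfl⟩

end Module

theorem LinearMap.rTensor_injective_of_retract {R : Type*} [CommRing R]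
    {M N P Q : Type*} [AddCommGroup M] [Module R M] [AddCommGroup N] [Module R N]
    [AddCommGroup P] [Module R P] [AddCommGroup Q] [Module R Q]
    (f : N →ₗ[R] M) (i : P →ₗ[R] Q) (p : Q →ₗ[R] P) (hpi : p ∘ₗ i = LinearMap.id)
    (hf : Function.Injective (f.rTensor Q)) : Function.Injective (f.rTensor P) := by
  have hi : Function.Injective (i.lTensor N) :=
    Function.LeftInverse.injective (g := p.lTensor N) fun x => by
      rw [← LinearMap.comp_apply, ← LinearMap.lTensor_comp, hpi, LinearMap.lTensor_id,
        LinearMap.id_apply]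
  have hsquare : i.lTensor M ∘ₗ f.rTensor P = f.rTensor Q ∘ₗ i.lTensor N := by
    rw [LinearMap.lTensor_comp_rTensor, LinearMap.rTensor_comp_lTensor]
  have hcomp : Function.Injective (i.lTensor M ∘ₗ f.rTensor P) := by
    rw [hsquare, LinearMap.coe_comp]
    exact hf.comp hi
  rw [LinearMap.coe_comp] at hcomp
  exact hcomp.of_comp

theorem lcomp_dualMap_comp_natMap {R : Type*} [CommRing R]
    {M N P : Type*} [AddCommGroup M] [Module R M] [AddCommGroup N] [Module R N]
    [AddCommGroup P] [Module R P] (f : N →ₗ[R] M) :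
    LinearMap.lcomp R P f.dualMap ∘ₗ natMap R N P = natMap R M P ∘ₗ f.rTensor P := by
  ext
  rfl

theorem stmt7 (R : Type u) [CommRing R]
    (M : Type v) [AddCommGroup M] [Module R M]
    (N : Type v) [AddCommGroup N] [Module R N]
    (f : N →ₗ[R] M)
    (hf : ∀ (S : Type v) [CommRing S] [Algebra R S], Function.Injective (f.rTensor S))
    (hM : ∀ (P : Type v) [AddCommGroup P] [Module R P], Function.Injective (natMap R M P)) :
    ∀ (P : Type v) [AddCommGroup P] [Module R P], Function.Injective (natMap R N P) := by
  intro P _ _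
  obtain ⟨S, _, _, i, p, hpi⟩ := Module.exists_commRing_algebra_retract R P
  have hfP : Function.Injective (f.rTensor P) := f.rTensor_injective_of_retract i p hpi (hf S)
  have hcomp := (hM P).comp hfP
  rw [← LinearMap.coe_comp, ← lcomp_dualMap_comp_natMap, LinearMap.coe_comp] at hcomp
  exact hcomp.of_comp
end

section
/- Let R be a noetherian commutative ring and M a flat R-module. Suppose there is a directed family {M_i} of finitely generated submodules of M with M = ⋃_i M_i such that for each i the restriction map Hom_R(M,R) → Hom_R(M_i,R) is surjective. Then M is universally torsionless. -/
open TensorProduct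

/-!
Every `x ∈ M ⊗ N` comes from some `y ∈ Lᵢ ⊗ N`. As `Lᵢ` is finitely presented and `M` is flat,
the inclusion `Lᵢ → M` factors through a finite free module `F` (Lazard). Every functional on `F`,
restricted to `Lᵢ`, extends to `M`; so if all functionals on `M` kill `x`, all functionals on `F`
kill the image of `y` in `F ⊗ N`. Since `F ⊗ N ≅ Hom(F*, N)`, that image is `0`, hence so is `x`.
-/

section

variable {R : Type*} [CommRing R] {M : Type*} [AddCommGroup M] [Module R M]
  {N : Type*} [AddCommGroup N] [Module R N]

theorem natMap_rTensor_apply {P : Type*} [AddCommGroup P] [Module R P] (f : P →ₗ[R] M)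
    (y : P ⊗[R] N) (w : Module.Dual R M) :
    natMap R M N (f.rTensor N y) w = natMap R P N y (w ∘ₗ f) := by
  induction y using TensorProduct.induction_on with
  | zero => simp
  | tmul p n => simp [natMap]
  | add y z hy hz => simp only [map_add, LinearMap.add_apply, hy, hz]

theorem natMap_bijective [Module.Finite R M] [Module.Projective R M] :
    Function.Bijective (natMap R M N) :=
  (dualTensorHom_bijective ..).comp (LinearEquiv.rTensor N (Module.evalEquiv R M)).bijective

theorem eq_zero_of_mem_range_rTensor_of_natMap_eq_zero {P : Type*} [AddCommGroup P] [Module R P]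
    [Module.FinitePresentation R P] [Module.Flat R M] (f : P →ₗ[R] M)
    (hf : Function.Surjective fun w : Module.Dual R M => w ∘ₗ f) {x : M ⊗[R] N}
    (hx : x ∈ LinearMap.range (f.rTensor N)) (h : natMap R M N x = 0) : x = 0 := by
  obtain ⟨y, rfl⟩ := hx
  obtain ⟨k, f₁, f₂, rfl⟩ := Module.Flat.exists_factorization_of_finitePresentation f
  suffices f₁.rTensor N y = 0 by rw [LinearMap.rTensor_comp_apply, this, map_zero]
  refine natMap_bijective.injective ?_
  rw [map_zero]
  refine LinearMap.ext fun φ ↦ ?_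
  obtain ⟨w, hw⟩ := hf (φ ∘ₗ f₁)
  calc natMap R _ N (f₁.rTensor N y) φ = natMap R P N y (φ ∘ₗ f₁) := natMap_rTensor_apply ..
    _ = natMap R P N y (w ∘ₗ f₂ ∘ₗ f₁) := by rw [← hw]
    _ = natMap R M N ((f₂ ∘ₗ f₁).rTensor N y) w := (natMap_rTensor_apply ..).symm
    _ = 0 := by rw [h]; rfl

theorem Submodule.exists_mem_range_rTensor_subtype_of_directed {ι : Type*} [Nonempty ι]
    {L : ι → Submodule R M} (hdir : Directed (· ≤ ·) L) (hsup : ⨆ i, L i = ⊤) (x : M ⊗[R] N) :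
    ∃ i, x ∈ LinearMap.range ((L i).subtype.rTensor N) := by
  obtain ⟨M', hM', hx⟩ := TensorProduct.exists_finite_submodule_left_of_setFinite {x}
    (Set.finite_singleton x)
  have hM'_compact : IsCompactElement M' := (fg_iff_compact M').mp (Module.Finite.iff_fg.mp hM')
  obtain ⟨_, ⟨i, rfl⟩, hle⟩ :=
    (CompleteLattice.isCompactElement_iff_le_of_directed_sSup_le _ M').mp hM'_compact
      _ (Set.range_nonempty L) hdir.directedOn_range (by rw [sSup_range, hsup]; exact le_top)
  refine ⟨i, ?_⟩
  rw [← subtype_comp_inclusion M' _ hle, LinearMap.rTensor_comp] at hx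
  exact LinearMap.range_comp_le_range _ _ (hx rfl)

end

theorem stmt13 (R : Type u) [CommRing R] [IsNoetherianRing R]
    (M : Type v) [AddCommGroup M] [Module R M] [Module.Flat R M]
    (g : Type v) (L : g → Submodule R M)
    (hdir : Directed (· ≤ ·) L)
    (hfg : ∀ i, (L i).FG)
    (hsup : ⨆ i, L i = ⊤)
    (hsurj : ∀ i, Function.Surjective fun w : M →ₗ[R] R => w.comp (L i).subtype) :
    ∀ (N : Type v) [AddCommGroup N] [Module R N], Function.Injective (natMap R M N) := by
  intro N _ _
  rcases isEmpty_or_nonempty g with _ | _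
  · have : Subsingleton M := (Submodule.subsingleton_iff R).mp <|
      subsingleton_iff_bot_eq_top.mp (by rwa [iSup_of_empty] at hsup)
    exact Function.injective_of_subsingleton _
  refine (injective_iff_map_eq_zero _).mpr fun x hx ↦ ?_
  obtain ⟨i, hi⟩ := Submodule.exists_mem_range_rTensor_subtype_of_directed hdir hsup x
  have : Module.Finite R (L i) := Module.Finite.iff_fg.mpr (hfg i)
  have : Module.FinitePresentation R (L i) := Module.finitePresentation_of_finite R (L i)
  exact eq_zero_of_mem_range_rTensor_of_natMap_eq_zero _ (hsurj i) hi hx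
end
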